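/- arXiv:math/9502214 — 2 statements merged into one kernel-verified Lean document; each statement's English description precedes it below -/
import Mathlib

section
/- Let R be a commutative ring, n ≥ 0, and let a_1, …, a_n and b_1, …, b_{n+1} be elements of R. Then in the polynomial ring R[x], ∏_{i=1}^{n} (x − a_i) = ∑_{j=0}^{n} comp_{n−j}({a_1, …, a_n}; {b_1, …, b_{j+1}}) · ∏_{i=1}^{j} (x − b_i), i.e. the connection constant expressing a polynomial with persistant roots a_1, …, a_n in terms of the polynomials with persistant roots b_1, b_2, … is a complementary symmetric function. -/
/-- `h_n(B)`: the complete homogeneous symmetric function of degree `n` in the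
elements of the multiset `B`, defined as the coefficient of `t^n` in
`∏_{b ∈ B} (1 + b t + b² t² + ⋯) = ∏_{b ∈ B} 1/(1 - b t)`. -/
noncomputable def hsymmM {R : Type*} [CommRing R] (B : Multiset R) (n : ℕ) : R :=
  PowerSeries.coeff n ((B.map fun b => PowerSeries.mk fun k => b ^ k).prod)

/-- `e_k(A)`: the elementary symmetric function of degree `k` in the elements of
the multiset `A`. -/
def esymmM {R : Type*} [CommRing R] (A : Multiset R) (k : ℕ) : R :=
  ((A.powersetCard k).map Multiset.prod).sum

/-- The complementary symmetric function `comp_n(A;B) = ∑_{j=0}^n (-1)^j e_j(A) h_{n-j}(B)`. -/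
noncomputable def compM {R : Type*} [CommRing R] (A B : Multiset R) (n : ℕ) : R :=
  ∑ j ∈ Finset.range (n + 1), (-1 : R) ^ j * esymmM A j * hsymmM B (n - j)

/-! `comp_n(A;B)` is the `t^n`-coefficient of `∏_{a ∈ A} (1 - a t) / ∏_{b ∈ B} (1 - b t)`.
Adding a root `a` to `A` and a root `b` to `B` multiplies this series by
`(1 - a t) / (1 - b t) = 1 + (b - a) t / (1 - b t)`, whence
`comp_{m+1}(a::A; b::B) = comp_{m+1}(A; B) + (b - a) comp_m(A; b::B)`. On the polynomial side
`(x - a) ∏_{i<j} (x - b_i) = ∏_{i≤j} (x - b_i) + (b_j - a) ∏_{i<j} (x - b_i)`,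
so multiplying the expansion for `A` by `x - a` and regrouping with this recursion gives the
expansion for `a::A`.
The boundary terms are `comp_0 = 1` and `comp_k(A; ∅) = 0` for `k > |A|`. -/

section GeneratingSeries

open PowerSeries

variable {R : Type*} [CommRing R]

noncomputable def esymmSeries (A : Multiset R) : R⟦X⟧ :=
  (A.map fun a => 1 - C a * X).prod

noncomputable def hsymmSeries (B : Multiset R) : R⟦X⟧ :=
  (B.map fun b => mk fun k => b ^ k).prod

theorem one_sub_C_mul_X_mul_mk_pow (b : R) : (1 - C b * X) * mk (fun k => b ^ k) = 1 := by
  ext (_ | n)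
  · simp
  · rw [sub_mul, one_mul, mul_assoc, map_sub, coeff_C_mul, coeff_succ_X_mul]
    simp [pow_succ, mul_comm]

theorem esymmSeries_cons (a : R) (A : Multiset R) :
    esymmSeries (a ::ₘ A) = (1 - C a * X) * esymmSeries A := by
  simp [esymmSeries]

theorem one_sub_C_mul_X_mul_hsymmSeries_cons (b : R) (B : Multiset R) :
    (1 - C b * X) * hsymmSeries (b ::ₘ B) = hsymmSeries B := by
  rw [hsymmSeries, Multiset.map_cons, Multiset.prod_cons, ← mul_assoc,
    one_sub_C_mul_X_mul_mk_pow, one_mul, hsymmSeries]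

theorem coeff_esymmSeries (A : Multiset R) (k : ℕ) :
    coeff k (esymmSeries A) = (-1) ^ k * esymmM A k := by
  induction A using Multiset.induction generalizing k with
  | empty => cases k <;> simp [esymmSeries, esymmM, coeff_one, Multiset.powersetCard_zero_right]
  | cons a A ih =>
    cases k with
    | zero => simpa [esymmSeries_cons, esymmM] using ih 0
    | succ k =>
      rw [esymmSeries_cons, sub_mul, one_mul, mul_assoc, map_sub, coeff_C_mul,
        coeff_succ_X_mul, ih, ih]
      simp only [esymmM, Multiset.powersetCard_cons, Multiset.map_add, Multiset.sum_add,
        Multiset.map_map, Function.comp_def, Multiset.prod_cons, Multiset.sum_map_mul_left]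
      ring

theorem compM_eq_coeff (A B : Multiset R) (n : ℕ) :
    compM A B n = coeff n (esymmSeries A * hsymmSeries B) := by
  rw [coeff_mul, Finset.Nat.sum_antidiagonal_eq_sum_range_succ_mk, compM]
  refine Finset.sum_congr rfl fun j _ => ?_
  rw [coeff_esymmSeries]
  rfl

theorem compM_zero (A B : Multiset R) : compM A B 0 = 1 := by
  simp [compM, esymmM, hsymmM, map_multiset_prod, Multiset.map_map, Function.comp_def]

theorem compM_zero_right_of_card_lt (A : Multiset R) {k : ℕ} (h : Multiset.card A < k) :
    compM A 0 k = 0 := by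
  rw [compM_eq_coeff, hsymmSeries, Multiset.map_zero, Multiset.prod_zero, mul_one,
    coeff_esymmSeries, esymmM, Multiset.powersetCard_eq_empty _ h]
  simp

theorem compM_cons_cons (a b : R) (A B : Multiset R) (m : ℕ) :
    compM (a ::ₘ A) (b ::ₘ B) (m + 1) =
      compM A B (m + 1) + (b - a) * compM A (b ::ₘ B) m := by
  have key : esymmSeries (a ::ₘ A) * hsymmSeries (b ::ₘ B) = esymmSeries A * hsymmSeries B +
      C (b - a) * (X * (esymmSeries A * hsymmSeries (b ::ₘ B))) := by
    rw [esymmSeries_cons, ← one_sub_C_mul_X_mul_hsymmSeries_cons b B, map_sub]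
    ring
  rw [compM_eq_coeff, key, map_add, coeff_C_mul, coeff_succ_X_mul, ← compM_eq_coeff,
    ← compM_eq_coeff]

end GeneratingSeries

open Polynomial Finset

-- Indexing by the antidiagonal `j + k = |A|` avoids the truncated subtraction `|A| - j`.
theorem multiset_prod_X_sub_C_eq_sum_compM_mul_prod {R : Type*} [CommRing R] (A : Multiset R)
    (b : ℕ → R) :
    (A.map fun a => X - C a).prod =
      ∑ p ∈ antidiagonal (Multiset.card A),
        C (compM A ((Multiset.range (p.1 + 1)).map b) p.2) *
          ∏ i ∈ range p.1, (X - C (b i)) := by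
  set B : ℕ → Multiset R := fun j => (Multiset.range j).map b
  set P : ℕ → R[X] := fun j => ∏ i ∈ range j, (X - C (b i))
  have hB (j : ℕ) : B (j + 1) = b j ::ₘ B j := by simp [B, Multiset.range_succ]
  have hP (j : ℕ) (a : R) : (X - C a) * P j = P (j + 1) + C (b j - a) * P j := by
    simp only [P, prod_range_succ, map_sub]
    ring
  induction A using Multiset.induction with
  | empty => simp [compM_zero]
  | cons a A ih =>
    set n := Multiset.card A
    -- Both sides are `∑_{j+k=n+1} C (comp_k(A; B_j)) P_j`, split off at either end.
    have shift : ∑ p ∈ antidiagonal n, C (compM A (B (p.1 + 1)) p.2) * P (p.1 + 1) =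
        P (n + 1) + ∑ p ∈ antidiagonal n, C (compM A (B p.1) (p.2 + 1)) * P p.1 := by
      have h0 : compM A (B 0) (n + 1) = 0 := compM_zero_right_of_card_lt A (Nat.lt_succ_self n)
      have h := Nat.sum_antidiagonal_succ (n := n) (f := fun p => C (compM A (B p.1) p.2) * P p.1)
      rw [Nat.sum_antidiagonal_succ', h0] at h
      simpa [compM_zero] using h.symm
    rw [Multiset.map_cons, Multiset.prod_cons, ih, Multiset.card_cons]
    calc (X - C a) * ∑ p ∈ antidiagonal n, C (compM A (B (p.1 + 1)) p.2) * P p.1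
        = ∑ p ∈ antidiagonal n, C (compM A (B (p.1 + 1)) p.2) * P (p.1 + 1) +
            ∑ p ∈ antidiagonal n, C (b p.1 - a) * C (compM A (B (p.1 + 1)) p.2) * P p.1 := by
          rw [mul_sum, ← sum_add_distrib]
          refine sum_congr rfl fun p _ => ?_
          rw [mul_left_comm, hP]
          ring
      _ = P (n + 1) + ∑ p ∈ antidiagonal n,
            C (compM A (B p.1) (p.2 + 1) + (b p.1 - a) * compM A (B (p.1 + 1)) p.2) * P p.1 := by
          rw [shift, add_assoc, ← sum_add_distrib]
          simp only [map_add, map_mul, add_mul]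
      _ = ∑ p ∈ antidiagonal (n + 1), C (compM (a ::ₘ A) (B (p.1 + 1)) p.2) * P p.1 := by
          rw [Nat.sum_antidiagonal_succ']
          simp only [hB, compM_cons_cons, compM_zero, map_one, one_mul]

/-- Connection constants between sequences of polynomials with persistant roots:
`∏_{i=1}^n (x - a_i) = ∑_{j=0}^n comp_{n-j}({a₁,…,a_n}; {b₁,…,b_{j+1}}) ∏_{i=1}^j (x - b_i)`. -/
theorem stmt6 {R : Type*} [CommRing R] (n : ℕ) (a b : ℕ → R) :
    ∏ i ∈ Finset.range n, (Polynomial.X - Polynomial.C (a (i + 1))) =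
      ∑ j ∈ Finset.range (n + 1),
        Polynomial.C (compM ((Multiset.range n).map fun i => a (i + 1))
            ((Multiset.range (j + 1)).map fun i => b (i + 1)) (n - j)) *
          ∏ i ∈ Finset.range j, (Polynomial.X - Polynomial.C (b (i + 1))) := by
  have h := multiset_prod_X_sub_C_eq_sum_compM_mul_prod
    ((Multiset.range n).map fun i => a (i + 1)) fun i => b (i + 1)
  rw [Multiset.map_map, Multiset.card_map, Multiset.card_range,
    Nat.sum_antidiagonal_eq_sum_range_succ_mk] at h
  exact h
end

section
/- For integers k ≤ n ≤ −1, define the extended Stirling numbers (inverse Laurent series region) s(n,k) := h_{n−k}(−1, −2, …, n) (the complete homogeneous symmetric function of degree n−k in the −n integers −1, −2, …, n) and S(n,k) := (−1)^{n−k} · e_{n−k}(−1, −2, …, k+1) (the elementary symmetric function of degree n−k in the −k−1 integers −1, −2, …, k+1), and set s(n,k) = S(n,k) = 0 when k > n. Then for all integers k ≤ n ≤ −1: s(n, k) = s(n−1, k−1) − (n−1)·s(n−1, k) and S(n, k) = S(n−1, k−1) + k·S(n−1, k). -/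
/-- Extended Stirling numbers of the first kind, inverse Laurent series region:
for `k ≤ n ≤ -1`, `s(n,k) = h_{n-k}(-1, -2, …, n)` (in the `-n` integers `-1, …, n`),
and `s(n,k) = 0` for `k > n`. -/
noncomputable def sR3 (n k : ℤ) : ℤ :=
  if k ≤ n then
    hsymmM ((Multiset.range (-n).toNat).map fun j => -((j : ℤ) + 1)) (n - k).toNat
  else 0

/-- Extended Stirling numbers of the second kind, inverse Laurent series region:
for `k ≤ n ≤ -1`, `S(n,k) = (-1)^{n-k} e_{n-k}(-1, -2, …, k+1)` (in the `-k-1` integers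
`-1, …, k+1`), and `S(n,k) = 0` for `k > n`. -/
def SR3 (n k : ℤ) : ℤ :=
  if k ≤ n then
    (-1) ^ (n - k).toNat *
      esymmM ((Multiset.range (-k - 1).toNat).map fun j => -((j : ℤ) + 1)) (n - k).toNat
  else 0

section SymmetricFunctions

variable {R : Type*} [CommRing R]

lemma esymmM_zero (A : Multiset R) : esymmM A 0 = 1 := by
  simp [esymmM]

lemma esymmM_cons_succ (A : Multiset R) (x : R) (m : ℕ) :
    esymmM (x ::ₘ A) (m + 1) = esymmM A (m + 1) + x * esymmM A m := by
  simp [esymmM, Multiset.powersetCard_cons, Multiset.map_map, Multiset.sum_map_mul_left]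

lemma hsymmM_zero (B : Multiset R) : hsymmM B 0 = 1 := by
  simp only [hsymmM, PowerSeries.coeff_zero_eq_constantCoeff, map_multiset_prod,
    Multiset.map_map]
  convert Multiset.prod_map_one
  simp [PowerSeries.constantCoeff_mk]

lemma PowerSeries.mk_pow_eq_one_add_X_mul (x : R) :
    PowerSeries.mk (fun k => x ^ k) =
      1 + PowerSeries.X * (PowerSeries.C x * PowerSeries.mk (fun k => x ^ k)) := by
  ext (_ | m)
  · simp
  · simp [pow_succ, mul_comm]

lemma hsymmM_cons_succ (B : Multiset R) (x : R) (m : ℕ) :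
    hsymmM (x ::ₘ B) (m + 1) = hsymmM B (m + 1) + x * hsymmM (x ::ₘ B) m := by
  simp only [hsymmM, Multiset.map_cons, Multiset.prod_cons]
  conv_lhs => rw [PowerSeries.mk_pow_eq_one_add_X_mul x, add_mul, one_mul, mul_assoc, mul_assoc]
  rw [map_add, PowerSeries.coeff_succ_X_mul, PowerSeries.coeff_C_mul]

end SymmetricFunctions

def negRange (M : ℕ) : Multiset ℤ :=
  (Multiset.range M).map fun j => -((j : ℤ) + 1)

lemma negRange_succ (M : ℕ) : negRange (M + 1) = (-((M : ℤ) + 1)) ::ₘ negRange M := by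
  simp [negRange, Multiset.range_succ]

section Stirling

variable {n k : ℤ}

lemma sR3_of_le (h : k ≤ n) : sR3 n k = hsymmM (negRange (-n).toNat) (n - k).toNat :=
  if_pos h

lemma sR3_of_lt (h : n < k) : sR3 n k = 0 :=
  if_neg (not_le.mpr h)

lemma SR3_of_le (h : k ≤ n) :
    SR3 n k = (-1) ^ (n - k).toNat * esymmM (negRange (-k - 1).toNat) (n - k).toNat :=
  if_pos h

lemma SR3_of_lt (h : n < k) : SR3 n k = 0 :=
  if_neg (not_le.mpr h)

/-- Adjoining `n - 1` to `-1, …, n` is the recursion `h_{m+1}(x, B) = h_{m+1}(B) + x h_m(x, B)`. -/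
theorem sR3_rec (hk : k ≤ n) (hn : n ≤ 0) :
    sR3 n k = sR3 (n - 1) (k - 1) - (n - 1) * sR3 (n - 1) k := by
  rcases hk.eq_or_lt with rfl | hlt
  · rw [sR3_of_le le_rfl, sR3_of_le le_rfl, sR3_of_lt (sub_one_lt k)]
    simp [hsymmM_zero]
  · obtain ⟨m, hm⟩ : ∃ m : ℕ, (n - k).toNat = m + 1 := ⟨(n - 1 - k).toNat, by omega⟩
    have hM : (-(n - 1)).toNat = (-n).toNat + 1 := by omega
    have hx : -(((-n).toNat : ℤ) + 1) = n - 1 := by omega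
    rw [sR3_of_le hk, sR3_of_le (by omega : k - 1 ≤ n - 1), sR3_of_le (by omega : k ≤ n - 1),
      hm, show (n - 1 - (k - 1)).toNat = m + 1 by omega, show (n - 1 - k).toNat = m by omega,
      hM, negRange_succ, hx, hsymmM_cons_succ]
    ring

/-- Adjoining `k` to `-1, …, k + 1` is the recursion `e_{m+1}(x, A) = e_{m+1}(A) + x e_m(A)`. -/
theorem SR3_rec (hk : k ≤ n) (hk0 : k < 0) :
    SR3 n k = SR3 (n - 1) (k - 1) + k * SR3 (n - 1) k := by
  rcases hk.eq_or_lt with rfl | hlt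
  · rw [SR3_of_le le_rfl, SR3_of_le le_rfl, SR3_of_lt (sub_one_lt k)]
    simp [esymmM_zero]
  · obtain ⟨m, hm⟩ : ∃ m : ℕ, (n - k).toNat = m + 1 := ⟨(n - 1 - k).toNat, by omega⟩
    have hM : (-(k - 1) - 1).toNat = (-k - 1).toNat + 1 := by omega
    have hx : -(((-k - 1).toNat : ℤ) + 1) = k := by omega
    rw [SR3_of_le hk, SR3_of_le (by omega : k - 1 ≤ n - 1), SR3_of_le (by omega : k ≤ n - 1),
      hm, show (n - 1 - (k - 1)).toNat = m + 1 by omega, show (n - 1 - k).toNat = m by omega,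
      hM, negRange_succ, hx, esymmM_cons_succ]
    ring

end Stirling

/-- The Stirling recursions in region 3: for `k ≤ n ≤ -1`,
`s(n,k) = s(n-1,k-1) - (n-1) s(n-1,k)` and `S(n,k) = S(n-1,k-1) + k S(n-1,k)`. -/
theorem stmt18 (n k : ℤ) (hk : k ≤ n) (hn : n ≤ -1) :
    sR3 n k = sR3 (n - 1) (k - 1) - (n - 1) * sR3 (n - 1) k ∧
    SR3 n k = SR3 (n - 1) (k - 1) + k * SR3 (n - 1) k :=
  ⟨sR3_rec hk (by omega), SR3_rec hk (by omega)⟩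
end
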